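/- For x = (x0,...,x4) ∈ ℂ^5, the five equalities M*(x)_{23} = −M*(x)_{15}, M*(x)_{26} = M*(x)_{13}, M*(x)_{14} = −M*(x)_{35}, M*(x)_{16} = M*(x)_{45}, M*(x)_{46} = −M*(x)_{12} hold if and only if x_i^2 + 2·x_{i+1}·x_{i+2} = 0 for all i ∈ ℤ/5 (indices mod 5); consequently (by smoothness of the Klein cubic) the only x ∈ ℂ^5 satisfying all five equalities is x = 0. (This is the statement that the image of the kernel map Ψ of the Klein cubic into Gr(2,6) is disjoint from the linear section X, which is the key step in proving that X is nonsingular.) -/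
import Mathlib


/-- The matrix `M*` evaluated at a point `x ∈ ℂ⁵`. -/
def kleinMatrixStarEval (x : Fin 5 → ℂ) : Matrix (Fin 6) (Fin 6) ℂ :=
  !![0, x 0 * x 1, x 2 * x 3, x 1 * x 2, x 0 * x 4, x 3 * x 4;
     -(x 0 * x 1), 0, x 3 ^ 2 + x 0 * x 4, x 1 * x 3, -(x 0 * x 2), -(x 1 ^ 2) - x 2 * x 3;
     -(x 2 * x 3), -(x 3 ^ 2) - x 0 * x 4, 0, -(x 2 * x 4), x 0 ^ 2 + x 1 * x 2, x 0 * x 3;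
     -(x 1 * x 2), -(x 1 * x 3), x 2 * x 4, 0, -(x 2 ^ 2) - x 3 * x 4, x 0 * x 1 + x 4 ^ 2;
     -(x 0 * x 4), x 0 * x 2, -(x 0 ^ 2) - x 1 * x 2, x 2 ^ 2 + x 3 * x 4, 0, -(x 1 * x 4);
     -(x 3 * x 4), x 1 ^ 2 + x 2 * x 3, -(x 0 * x 3), -(x 0 * x 1) - x 4 ^ 2, x 1 * x 4, 0]

/-- The five linear conditions `M*(x)₂₃ = −M*(x)₁₅`, `M*(x)₂₆ = M*(x)₁₃`,
`M*(x)₁₄ = −M*(x)₃₅`, `M*(x)₁₆ = M*(x)₄₅`, `M*(x)₄₆ = −M*(x)₁₂`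
(1-based indices in the paper; 0-based here). -/
def kleinStarRelations (x : Fin 5 → ℂ) : Prop :=
  kleinMatrixStarEval x 1 2 = -(kleinMatrixStarEval x 0 4) ∧
  kleinMatrixStarEval x 1 5 = kleinMatrixStarEval x 0 2 ∧
  kleinMatrixStarEval x 0 3 = -(kleinMatrixStarEval x 2 4) ∧
  kleinMatrixStarEval x 0 5 = kleinMatrixStarEval x 3 4 ∧
  kleinMatrixStarEval x 3 5 = -(kleinMatrixStarEval x 0 1)

lemma klein_cascade (a b c d e : ℂ) (ha : a = 0)
    (h1 : b ^ 2 + 2 * c * d = 0) (h2 : c ^ 2 + 2 * d * e = 0)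
    (h3 : d ^ 2 + 2 * e * a = 0) (h4 : e ^ 2 + 2 * a * b = 0) :
    b = 0 ∧ c = 0 ∧ d = 0 ∧ e = 0 := by
  subst ha
  have hd : d = 0 := pow_eq_zero_iff two_ne_zero |>.mp (by linear_combination h3)
  have he : e = 0 := pow_eq_zero_iff two_ne_zero |>.mp (by linear_combination h4)
  have hc : c = 0 := pow_eq_zero_iff two_ne_zero |>.mp (by linear_combination h2 - 2 * e * hd)
  have hb : b = 0 := pow_eq_zero_iff two_ne_zero |>.mp (by linear_combination h1 - 2 * c * hd)
  exact ⟨hb, hc, hd, he⟩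

lemma klein_only_zero (a b c d e : ℂ)
    (h0 : a ^ 2 + 2 * b * c = 0) (h1 : b ^ 2 + 2 * c * d = 0)
    (h2 : c ^ 2 + 2 * d * e = 0) (h3 : d ^ 2 + 2 * e * a = 0)
    (h4 : e ^ 2 + 2 * a * b = 0) :
    a = 0 ∧ b = 0 ∧ c = 0 ∧ d = 0 ∧ e = 0 := by
  have hp : (33 : ℂ) * (a * b * c * d * e) ^ 2 = 0 := by
    linear_combination (b^2*c^2*d^2*e^2) * h0 + (-2*b*c*c^2*d^2*e^2) * h1 +
      (4*b*c^2*d*d^2*e^2) * h2 + (-8*b*c^2*d^2*e*e^2) * h3 + (16*a*b*c^2*d^2*e^2) * h4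
  have hp2 : (a * b * c * d * e) ^ 2 = 0 := by
    have h33 : (33 : ℂ) ≠ 0 := by norm_num
    exact (mul_eq_zero.mp hp).resolve_left h33
  have hprod : a * b * c * d * e = 0 := pow_eq_zero_iff two_ne_zero |>.mp hp2
  rcases mul_eq_zero.mp hprod with h | he
  · rcases mul_eq_zero.mp h with h | hd
    · rcases mul_eq_zero.mp h with h | hc
      · rcases mul_eq_zero.mp h with ha | hb
        · obtain ⟨hb, hc, hd, he⟩ := klein_cascade a b c d e ha h1 h2 h3 h4
          exact ⟨ha, hb, hc, hd, he⟩
        · obtain ⟨hc, hd, he, ha⟩ := klein_cascade b c d e a hb h2 h3 h4 h0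
          exact ⟨ha, hb, hc, hd, he⟩
      · obtain ⟨hd, he, ha, hb⟩ := klein_cascade c d e a b hc h3 h4 h0 h1
        exact ⟨ha, hb, hc, hd, he⟩
    · obtain ⟨he, ha, hb, hc⟩ := klein_cascade d e a b c hd h4 h0 h1 h2
      exact ⟨ha, hb, hc, hd, he⟩
  · obtain ⟨ha, hb, hc, hd⟩ := klein_cascade e a b c d he h0 h1 h2 h3
    exact ⟨ha, hb, hc, hd, he⟩

/-- The five Plücker relations on `M*(x)` hold iff `x` satisfies the Jacobian equations
of Klein's cubic; hence (by smoothness of the Klein cubic) only for `x = 0`. -/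
theorem kleinStarRelations_iff (x : Fin 5 → ℂ) :
    (kleinStarRelations x ↔ ∀ i : Fin 5, x i ^ 2 + 2 * x (i + 1) * x (i + 2) = 0) ∧
    (kleinStarRelations x → x = 0) := by
  have key : kleinStarRelations x ↔
      (x 0 ^ 2 + 2 * x 1 * x 2 = 0 ∧ x 1 ^ 2 + 2 * x 2 * x 3 = 0 ∧
       x 2 ^ 2 + 2 * x 3 * x 4 = 0 ∧ x 3 ^ 2 + 2 * x 4 * x 0 = 0 ∧
       x 4 ^ 2 + 2 * x 0 * x 1 = 0) := by
    unfold kleinStarRelations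
    constructor
    · rintro ⟨h1, h2, h3, h4, h5⟩
      have e1 : x 3 ^ 2 + x 0 * x 4 = -(x 0 * x 4) := h1
      have e2 : -(x 1 ^ 2) - x 2 * x 3 = x 2 * x 3 := h2
      have e3 : x 1 * x 2 = -(x 0 ^ 2 + x 1 * x 2) := h3
      have e4 : x 3 * x 4 = -(x 2 ^ 2) - x 3 * x 4 := h4
      have e5 : x 0 * x 1 + x 4 ^ 2 = -(x 0 * x 1) := h5
      exact ⟨by linear_combination e3, by linear_combination -e2, by linear_combination e4,
        by linear_combination e1, by linear_combination e5⟩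
    · rintro ⟨h0, h1, h2, h3, h4⟩
      exact ⟨show x 3 ^ 2 + x 0 * x 4 = -(x 0 * x 4) by linear_combination h3,
        show -(x 1 ^ 2) - x 2 * x 3 = x 2 * x 3 by linear_combination -h1,
        show x 1 * x 2 = -(x 0 ^ 2 + x 1 * x 2) by linear_combination h0,
        show x 3 * x 4 = -(x 2 ^ 2) - x 3 * x 4 by linear_combination h2,
        show x 0 * x 1 + x 4 ^ 2 = -(x 0 * x 1) by linear_combination h4⟩
  constructor
  · rw [key]
    constructor
    · rintro ⟨h0, h1, h2, h3, h4⟩ i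
      fin_cases i <;> simpa using ‹_›
    · intro h
      exact ⟨by simpa using h 0, by simpa using h 1, by simpa using h 2,
        by simpa using h 3, by simpa using h 4⟩
  · intro h
    obtain ⟨h0, h1, h2, h3, h4⟩ := key.mp h
    obtain ⟨ha, hb, hc, hd, he⟩ := klein_only_zero (x 0) (x 1) (x 2) (x 3) (x 4) h0 h1 h2 h3 h4
    funext i
    fin_cases i <;> simpa using ‹_›
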